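/- arXiv:1601.05775 — 6 statements merged into one kernel-verified Lean document; each statement's English description precedes it below -/
import Mathlib

section
/- With the setup of σ-conductance, for a discrete community c ∈ {0,1}ⁿ (with positive volume) the gradient satisfies ∇φ_σ(c)_i = (w_i/a_{cV})·( a_{cc}/a_{cV} + (1 − 2c_i)σ − 2a_{ic}/w_i ), where a_{ic} = (Ac)_i, a_{cc} = cᵀAc, a_{cV} = Σⱼ cⱼwⱼ. -/
/-!
Along the line `t ↦ Function.update c i t` the cut term, the volume and the σ-term of `phiSigma`
are polynomials in `t` with explicit derivatives `2 (A c)ᵢ`, `wᵢ` and `2 cᵢ wᵢ`; the quotient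
rule then gives the gradient, once `∑ cⱼ² wⱼ = a_{cV}` is used, which holds because `cⱼ ∈ {0, 1}`.
-/

open Finset

/-- degree / weight of node `i`. -/
noncomputable def w {n : ℕ} (A : Matrix (Fin n) (Fin n) ℝ) (i : Fin n) : ℝ := ∑ j, A i j

/-- σ-conductance as a function of a real membership vector. -/
noncomputable def phiSigma {n : ℕ} (A : Matrix (Fin n) (Fin n) ℝ) (σ : ℝ) (c : Fin n → ℝ) : ℝ :=
  1 - (∑ i, ∑ j, c i * A i j * c j) / (∑ i, c i * w A i)
    - σ * (∑ i, (c i) ^ 2 * w A i) / (∑ i, c i * w A i)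

section UpdateDerivatives

variable {ι : Type*} [DecidableEq ι] (c : ι → ℝ) (i : ι)

theorem hasDerivAt_update_apply (j : ι) (s : ℝ) :
    HasDerivAt (fun t => Function.update c i t j) ((Pi.single i 1 : ι → ℝ) j) s :=
  hasDerivAt_pi.1 (hasDerivAt_update c i s) j

variable [Fintype ι]

theorem hasDerivAt_sum_update_mul (v : ι → ℝ) (s : ℝ) :
    HasDerivAt (fun t => ∑ j, Function.update c i t j * v j) (v i) s := by
  have := HasDerivAt.fun_sum fun j (_ : j ∈ univ) =>
    (hasDerivAt_update_apply c i j s).mul_const (v j)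
  simpa [Pi.single_apply] using this

theorem hasDerivAt_sum_update_sq_mul (v : ι → ℝ) (s : ℝ) :
    HasDerivAt (fun t => ∑ j, Function.update c i t j ^ 2 * v j) (2 * s * v i) s := by
  have := HasDerivAt.fun_sum fun j (_ : j ∈ univ) =>
    ((hasDerivAt_update_apply c i j s).pow 2).mul_const (v j)
  simpa [Pi.single_apply, mul_comm] using this

theorem hasDerivAt_quadForm_update (A : Matrix ι ι ℝ) :
    HasDerivAt (fun t => ∑ k, ∑ j, Function.update c i t k * A k j * Function.update c i t j)
      (∑ j, (A i j + A j i) * c j) (c i) := by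
  have := HasDerivAt.fun_sum fun k (_ : k ∈ univ) => HasDerivAt.fun_sum fun j (_ : j ∈ univ) =>
    ((hasDerivAt_update_apply c i k (c i)).mul_const (A k j)).mul
      (hasDerivAt_update_apply c i j (c i))
  refine this.congr_deriv ?_
  simp [Pi.single_apply, sum_add_distrib, mul_add, mul_comm]

end UpdateDerivatives

theorem sum_sq_mul_eq_sum_mul {ι : Type*} [Fintype ι] {c : ι → ℝ}
    (hdisc : ∀ i, c i = 0 ∨ c i = 1) (v : ι → ℝ) :
    ∑ j, c j ^ 2 * v j = ∑ j, c j * v j :=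
  sum_congr rfl fun j _ => by rcases hdisc j with h | h <;> simp [h]

theorem stmt_3_general {n : ℕ} (A : Matrix (Fin n) (Fin n) ℝ)
    (hsym : ∀ i j, A i j = A j i)
    (hw : ∀ i, 0 < w A i)
    (σ : ℝ) (c : Fin n → ℝ) (hdisc : ∀ i, c i = 0 ∨ c i = 1)
    (hvol : 0 < ∑ j, c j * w A j) (i : Fin n) :
    HasDerivAt (fun t => phiSigma A σ (Function.update c i t))
      (w A i / (∑ j, c j * w A j) *
        ((∑ k, ∑ j, c k * A k j * c j) / (∑ j, c j * w A j)
          + (1 - 2 * c i) * σ - 2 * (∑ j, A i j * c j) / w A i))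
      (c i) := by
  have hD := hasDerivAt_sum_update_mul c i (w A) (c i)
  have hD0 : ∑ j, Function.update c i (c i) j * w A j ≠ 0 := by
    simpa using hvol.ne'
  have hN := (hasDerivAt_quadForm_update c i A).div hD hD0
  have hS := ((hasDerivAt_sum_update_sq_mul c i (w A) (c i)).const_mul σ).div hD hD0
  refine ((hN.const_sub 1).sub hS).congr_deriv ?_
  have hsq := sum_sq_mul_eq_sum_mul hdisc (w A)
  have hAc : ∑ j, (A i j + A j i) * c j = 2 * ∑ j, A i j * c j := by
    simp only [← hsym i, ← two_mul, mul_assoc, ← mul_sum]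
  simp only [Function.update_eq_self, hsq, hAc]
  field_simp [hvol.ne', (hw i).ne']
  ring

/-- the gradient of σ-conductance at a discrete community. -/
theorem stmt_3 {n : ℕ} (A : Matrix (Fin n) (Fin n) ℝ)
    (hsym : ∀ i j, A i j = A j i) (hnonneg : ∀ i j, 0 ≤ A i j)
    (hw : ∀ i, 0 < w A i)
    (σ : ℝ) (c : Fin n → ℝ) (hdisc : ∀ i, c i = 0 ∨ c i = 1)
    (hvol : 0 < ∑ j, c j * w A j) (i : Fin n) :
    HasDerivAt (fun t => phiSigma A σ (Function.update c i t))
      (w A i / (∑ j, c j * w A j) *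
        ((∑ k, ∑ j, c k * A k j * c j) / (∑ j, c j * w A j)
          + (1 - 2 * c i) * σ - 2 * (∑ j, A i j * c j) / w A i))
      (c i) :=
  stmt_3_general A hsym hw σ c hdisc hvol i
end

section
/- For a discrete community c ∈ {0,1}ⁿ with positive volume, the gradient of σ-conductance is bounded by (w_i/a_{cV})·((1−2c_i)σ − 2) ≤ ∇φ_σ(c)_i ≤ (w_i/a_{cV})·((1−2c_i)σ + 1). In particular, if σ > 2 then ∇φ_σ(c)_i > 0 whenever c_i = 0, and ∇φ_σ(c)_i < 0 whenever c_i = 1. -/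
/-!
For `0 ≤ c ≤ 1` and `A ≥ 0` the two ratios `a_cc / a_cV` and `a_ic / w_i` in the gradient formula
lie in `[0, 1]`, so the bracket lies between `(1 - 2 c_i) σ - 2` and `(1 - 2 c_i) σ + 1`, and the
positive factor `w_i / a_cV` preserves both bounds. For `σ > 2` the lower bound is positive when
`c_i = 0` and the upper bound is negative when `c_i = 1`.
-/

open Finset

/-- Gradient of σ-conductance at a discrete community (formula from the paper). -/
noncomputable def gradPhiSigma {n : ℕ} (A : Matrix (Fin n) (Fin n) ℝ) (σ : ℝ)
    (c : Fin n → ℝ) (i : Fin n) : ℝ :=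
  w A i / (∑ j, c j * w A j) *
    ((∑ k, ∑ j, c k * A k j * c j) / (∑ j, c j * w A j)
      + (1 - 2 * c i) * σ - 2 * (∑ j, A i j * c j) / w A i)

section Bounds

variable {n : ℕ} {A : Matrix (Fin n) (Fin n) ℝ} {c : Fin n → ℝ}

lemma sum_mul_nonneg_of_nonneg (hA : ∀ i j, 0 ≤ A i j) (hc0 : ∀ j, 0 ≤ c j) (i : Fin n) :
    0 ≤ ∑ j, A i j * c j :=
  sum_nonneg fun j _ => mul_nonneg (hA i j) (hc0 j)

lemma sum_mul_le_w (hA : ∀ i j, 0 ≤ A i j) (hc1 : ∀ j, c j ≤ 1) (i : Fin n) :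
    ∑ j, A i j * c j ≤ w A i :=
  sum_le_sum fun j _ => mul_le_of_le_one_right (hA i j) (hc1 j)

lemma sum_mul_mul_eq_mul_sum (k : Fin n) : ∑ j, c k * A k j * c j = c k * ∑ j, A k j * c j := by
  simp only [mul_sum, mul_assoc]

lemma quadForm_nonneg (hA : ∀ i j, 0 ≤ A i j) (hc0 : ∀ j, 0 ≤ c j) :
    0 ≤ ∑ k, ∑ j, c k * A k j * c j :=
  sum_nonneg fun k _ => by
    rw [sum_mul_mul_eq_mul_sum]
    exact mul_nonneg (hc0 k) (sum_mul_nonneg_of_nonneg hA hc0 k)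

lemma quadForm_le_vol (hA : ∀ i j, 0 ≤ A i j) (hc0 : ∀ j, 0 ≤ c j) (hc1 : ∀ j, c j ≤ 1) :
    ∑ k, ∑ j, c k * A k j * c j ≤ ∑ k, c k * w A k :=
  sum_le_sum fun k _ => by
    rw [sum_mul_mul_eq_mul_sum]
    exact mul_le_mul_of_nonneg_left (sum_mul_le_w hA hc1 k) (hc0 k)

variable (hA : ∀ i j, 0 ≤ A i j) (hc0 : ∀ j, 0 ≤ c j) (hc1 : ∀ j, c j ≤ 1)
  (hvol : 0 < ∑ j, c j * w A j) {i : Fin n} (hwi : 0 < w A i) (σ : ℝ)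
include hA hc0 hc1 hvol hwi

lemma le_gradPhiSigma :
    w A i / (∑ j, c j * w A j) * ((1 - 2 * c i) * σ - 2) ≤ gradPhiSigma A σ c i := by
  refine mul_le_mul_of_nonneg_left ?_ (div_pos hwi hvol).le
  have hcc : 0 ≤ (∑ k, ∑ j, c k * A k j * c j) / ∑ j, c j * w A j :=
    div_nonneg (quadForm_nonneg hA hc0) hvol.le
  have hic : 2 * (∑ j, A i j * c j) / w A i ≤ 2 := by
    rw [div_le_iff₀ hwi]
    linarith [sum_mul_le_w hA hc1 i]
  linarith

lemma gradPhiSigma_le :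
    gradPhiSigma A σ c i ≤ w A i / (∑ j, c j * w A j) * ((1 - 2 * c i) * σ + 1) := by
  refine mul_le_mul_of_nonneg_left ?_ (div_pos hwi hvol).le
  have hcc : (∑ k, ∑ j, c k * A k j * c j) / ∑ j, c j * w A j ≤ 1 :=
    (div_le_one hvol).2 (quadForm_le_vol hA hc0 hc1)
  have hic : 0 ≤ 2 * (∑ j, A i j * c j) / w A i :=
    div_nonneg (mul_nonneg zero_le_two (sum_mul_nonneg_of_nonneg hA hc0 i)) hwi.le
  linarith

end Bounds

theorem stmt_4_general {n : ℕ} (A : Matrix (Fin n) (Fin n) ℝ)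
    (hnonneg : ∀ i j, 0 ≤ A i j)
    (hw : ∀ i, 0 < w A i)
    (σ : ℝ) (c : Fin n → ℝ) (hdisc : ∀ i, c i = 0 ∨ c i = 1)
    (hvol : 0 < ∑ j, c j * w A j) (i : Fin n) :
    (w A i / (∑ j, c j * w A j) * ((1 - 2 * c i) * σ - 2) ≤ gradPhiSigma A σ c i ∧
      gradPhiSigma A σ c i ≤ w A i / (∑ j, c j * w A j) * ((1 - 2 * c i) * σ + 1)) ∧
    (2 < σ → c i = 0 → 0 < gradPhiSigma A σ c i) ∧
    (2 < σ → c i = 1 → gradPhiSigma A σ c i < 0) := by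
  have hc0 : ∀ j, 0 ≤ c j := fun j => by rcases hdisc j with h | h <;> simp [h]
  have hc1 : ∀ j, c j ≤ 1 := fun j => by rcases hdisc j with h | h <;> simp [h]
  have hlow := le_gradPhiSigma hnonneg hc0 hc1 hvol (hw i) σ
  have hup := gradPhiSigma_le hnonneg hc0 hc1 hvol (hw i) σ
  have hscale : 0 < w A i / ∑ j, c j * w A j := div_pos (hw i) hvol
  refine ⟨⟨hlow, hup⟩, fun hσ2 hci => ?_, fun hσ2 hci => ?_⟩
  · rw [hci] at hlow
    exact (mul_pos hscale (by linarith)).trans_le hlow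
  · rw [hci] at hup
    exact hup.trans_lt (mul_neg_of_pos_of_neg hscale (by linarith))

/-- bounds on the gradient of σ-conductance at a discrete community,
and the sign consequences for σ > 2. -/
theorem stmt_4 {n : ℕ} (A : Matrix (Fin n) (Fin n) ℝ)
    (hsym : ∀ i j, A i j = A j i) (hnonneg : ∀ i j, 0 ≤ A i j)
    (hw : ∀ i, 0 < w A i)
    (σ : ℝ) (hσ : 0 ≤ σ) (c : Fin n → ℝ) (hdisc : ∀ i, c i = 0 ∨ c i = 1)
    (hvol : 0 < ∑ j, c j * w A j) (i : Fin n) :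
    (w A i / (∑ j, c j * w A j) * ((1 - 2 * c i) * σ - 2) ≤ gradPhiSigma A σ c i ∧
      gradPhiSigma A σ c i ≤ w A i / (∑ j, c j * w A j) * ((1 - 2 * c i) * σ + 1)) ∧
    (2 < σ → c i = 0 → 0 < gradPhiSigma A σ c i) ∧
    (2 < σ → c i = 1 → gradPhiSigma A σ c i < 0) :=
  stmt_4_general A hnonneg hw σ c hdisc hvol i
end

section
/- If σ > 2, then every discrete community c ∈ {0,1}ⁿ (with positive volume and with positive volume of its complement region, so the function is defined in a neighborhood) is a local minimum of the σ-conductance φ_σ restricted to the box [0,1]ⁿ. -/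
open Finset

/-! For discrete `c`, put `λ = cᵀAc / vol c ∈ [0, 1]` and `μ = λ + σ`. Then `φ_σ(c) = 1 - μ`, and
`φ_σ(c') ≥ 1 - μ` amounts to `N(c') - μ vol c' ≤ 0`, where `N(c) = cᵀAc + σ ∑ cᵢ² wᵢ`. Expand this
quadratic around `c` with `d = c' - c`. Since `dᵢ ≥ 0` where `cᵢ = 0` and `dᵢ ≤ 0` where `cᵢ = 1`,
the linear part is at most `-(σ - 2) ∑ |dᵢ| wᵢ`, while the quadratic part is at most
`(σ + 1) ε ∑ |dᵢ| wᵢ` once every `|dᵢ| ≤ ε`. So `ε = (σ - 2) / (σ + 1)` works. -/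

open Matrix

theorem Matrix.IsSymm.dotProduct_mulVec_add {ι R : Type*} [Fintype ι] [CommRing R]
    {A : Matrix ι ι R} (hA : A.IsSymm) (c d : ι → R) :
    (c + d) ⬝ᵥ A *ᵥ (c + d) = c ⬝ᵥ A *ᵥ c + 2 * (d ⬝ᵥ A *ᵥ c) + d ⬝ᵥ A *ᵥ d := by
  have hswap : c ⬝ᵥ A *ᵥ d = d ⬝ᵥ A *ᵥ c := by
    rw [dotProduct_mulVec, ← mulVec_transpose, hA.eq, dotProduct_comm]
  rw [mulVec_add, dotProduct_add, add_dotProduct, add_dotProduct, hswap]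
  ring

section

variable {n : ℕ} {A : Matrix (Fin n) (Fin n) ℝ}

theorem w_nonneg (hA : ∀ i j, 0 ≤ A i j) (i : Fin n) : 0 ≤ w A i :=
  Finset.sum_nonneg fun j _ => hA i j

theorem sum_sum_mul_mul_eq_dotProduct_mulVec (c : Fin n → ℝ) :
    ∑ i, ∑ j, c i * A i j * c j = c ⬝ᵥ A *ᵥ c := by
  simp only [dotProduct, mulVec, Finset.mul_sum, mul_assoc]

theorem phiSigma_eq (σ : ℝ) (c : Fin n → ℝ) :
    phiSigma A σ c
      = 1 - (c ⬝ᵥ A *ᵥ c + σ * ∑ i, c i ^ 2 * w A i) / ∑ i, c i * w A i := by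
  rw [phiSigma, sum_sum_mul_mul_eq_dotProduct_mulVec]
  ring

theorem abs_mulVec_apply_le (hA : ∀ i j, 0 ≤ A i j) {d : Fin n → ℝ} {ε : ℝ}
    (hd : ∀ j, |d j| ≤ ε) (i : Fin n) : |(A *ᵥ d) i| ≤ ε * w A i := by
  calc |(A *ᵥ d) i| = |∑ j, A i j * d j| := rfl
    _ ≤ ∑ j, |A i j * d j| := abs_sum_le_sum_abs _ _
    _ ≤ ∑ j, ε * A i j := by
        gcongr with j
        rw [abs_mul, abs_of_nonneg (hA i j), mul_comm]
        exact mul_le_mul_of_nonneg_right (hd j) (hA i j)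
    _ = ε * w A i := by rw [w, Finset.mul_sum]

theorem dotProduct_mulVec_self_le (hA : ∀ i j, 0 ≤ A i j) {d : Fin n → ℝ} {ε : ℝ}
    (hd : ∀ j, |d j| ≤ ε) : d ⬝ᵥ A *ᵥ d ≤ ∑ i, ε * |d i| * w A i := by
  refine Finset.sum_le_sum fun i _ => ?_
  calc d i * (A *ᵥ d) i ≤ |d i| * |(A *ᵥ d) i| := by rw [← abs_mul]; exact le_abs_self _
    _ ≤ |d i| * (ε * w A i) := by gcongr; exact abs_mulVec_apply_le hA hd i
    _ = ε * |d i| * w A i := by ring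

theorem mulVec_apply_mem_Icc (hA : ∀ i j, 0 ≤ A i j) {c : Fin n → ℝ}
    (hc : ∀ j, 0 ≤ c j ∧ c j ≤ 1) (i : Fin n) : (A *ᵥ c) i ∈ Set.Icc 0 (w A i) := by
  refine ⟨(Finset.sum_nonneg fun j _ => mul_nonneg (hA i j) (hc j).1 : 0 ≤ ∑ j, A i j * c j), ?_⟩
  have h := abs_mulVec_apply_le hA (fun j => (abs_of_nonneg (hc j).1).trans_le (hc j).2) i
  rw [one_mul] at h
  exact (le_abs_self _).trans h

theorem dotProduct_mulVec_self_mem_Icc (hA : ∀ i j, 0 ≤ A i j) {c : Fin n → ℝ}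
    (hc : ∀ j, 0 ≤ c j ∧ c j ≤ 1) :
    c ⬝ᵥ A *ᵥ c ∈ Set.Icc 0 (∑ i, c i * w A i) := by
  constructor
  · exact Finset.sum_nonneg fun i _ => mul_nonneg (hc i).1 (mulVec_apply_mem_Icc hA hc i).1
  · exact Finset.sum_le_sum fun i _ =>
      mul_le_mul_of_nonneg_left (mulVec_apply_mem_Icc hA hc i).2 (hc i).1

noncomputable def conductanceGap (A : Matrix (Fin n) (Fin n) ℝ) (σ μ : ℝ) (c : Fin n → ℝ) : ℝ :=
  c ⬝ᵥ A *ᵥ c + σ * ∑ i, c i ^ 2 * w A i - μ * ∑ i, c i * w A i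

theorem phiSigma_eq_sub_conductanceGap (σ μ : ℝ) {c : Fin n → ℝ} (hV : ∑ i, c i * w A i ≠ 0) :
    phiSigma A σ c = 1 - μ - conductanceGap A σ μ c / ∑ i, c i * w A i := by
  rw [phiSigma_eq, conductanceGap]
  field_simp
  ring

theorem conductanceGap_add (hA : A.IsSymm) (σ μ : ℝ) (c d : Fin n → ℝ) :
    conductanceGap A σ μ (c + d) = conductanceGap A σ μ c + d ⬝ᵥ A *ᵥ d
      + ∑ i, (d i * (2 * (A *ᵥ c) i + (2 * σ * c i - μ) * w A i) + σ * d i ^ 2 * w A i) := by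
  rw [conductanceGap, conductanceGap, hA.dotProduct_mulVec_add]
  simp only [dotProduct, Pi.add_apply, Finset.mul_sum, ← Finset.sum_add_distrib,
    ← Finset.sum_sub_distrib]
  exact Finset.sum_congr rfl fun i _ => by ring

theorem conductanceGap_eq_zero_of_discrete (σ : ℝ) {c : Fin n → ℝ}
    (hc : ∀ i, c i = 0 ∨ c i = 1) (hV : ∑ i, c i * w A i ≠ 0) :
    conductanceGap A σ ((c ⬝ᵥ A *ᵥ c) / ∑ i, c i * w A i + σ) c = 0 := by
  have hsq : ∑ i, c i ^ 2 * w A i = ∑ i, c i * w A i :=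
    Finset.sum_congr rfl fun i _ => by rcases hc i with h | h <;> simp [h]
  rw [conductanceGap, hsq]
  field_simp
  ring

/-- One coordinate of the expansion in `conductanceGap_add` around a discrete point, with room
`ε |y - x| v` left to absorb the quadratic term `d ⬝ᵥ A *ᵥ d`. -/
theorem coord_term_add_le_zero {x y a v l σ ε : ℝ} (hx : x = 0 ∨ x = 1) (hy0 : 0 ≤ y)
    (hy1 : y ≤ 1) (ha0 : 0 ≤ a) (hav : a ≤ v) (hl0 : 0 ≤ l) (hl1 : l ≤ 1) (hσ : 0 ≤ σ)
    (hyx : |y - x| ≤ ε) (hε : (σ + 1) * ε ≤ σ - 2) :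
    (y - x) * (2 * a + (2 * σ * x - (l + σ)) * v) + σ * (y - x) ^ 2 * v
      + ε * |y - x| * v ≤ 0 := by
  have hv : 0 ≤ v := ha0.trans hav
  rcases hx with rfl | rfl
  · rw [sub_zero, abs_of_nonneg hy0] at *
    nlinarith [mul_nonneg (mul_nonneg hy0 hv) hσ, mul_nonneg hy0 hv,
      mul_nonneg hy0 (sub_nonneg.2 hav), mul_nonneg (mul_nonneg hy0 hv) hl0,
      mul_le_mul_of_nonneg_left hyx (mul_nonneg (mul_nonneg hy0 hv) hσ)]
  · rw [abs_of_nonpos (by linarith : y - 1 ≤ 0)] at *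
    have ht : 0 ≤ 1 - y := by linarith
    nlinarith [mul_nonneg (mul_nonneg ht hv) hσ, mul_nonneg ht hv, mul_nonneg ht ha0,
      mul_nonneg (mul_nonneg ht hv) (sub_nonneg.2 hl1),
      mul_le_mul_of_nonneg_left hyx (mul_nonneg (mul_nonneg ht hv) hσ)]

theorem conductanceGap_le_of_discrete (hsymm : A.IsSymm) (hA : ∀ i j, 0 ≤ A i j)
    {σ l ε : ℝ} (hσ : 0 ≤ σ) (hl0 : 0 ≤ l) (hl1 : l ≤ 1) (hε : (σ + 1) * ε ≤ σ - 2)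
    {c c' : Fin n → ℝ} (hc : ∀ i, c i = 0 ∨ c i = 1) (hc' : ∀ i, 0 ≤ c' i ∧ c' i ≤ 1)
    (hd : ∀ i, |c' i - c i| ≤ ε) :
    conductanceGap A σ (l + σ) c' ≤ conductanceGap A σ (l + σ) c := by
  have hbox : ∀ i, 0 ≤ c i ∧ c i ≤ 1 := fun i => by rcases hc i with h | h <;> simp [h]
  have hexp := conductanceGap_add hsymm σ (l + σ) c (c' - c)
  rw [add_sub_cancel] at hexp
  have hquad := dotProduct_mulVec_self_le (d := c' - c) hA hd
  have hlin : ∑ i, ((c' i - c i) * (2 * (A *ᵥ c) i + (2 * σ * c i - (l + σ)) * w A i)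
      + σ * (c' i - c i) ^ 2 * w A i + ε * |c' i - c i| * w A i) ≤ 0 :=
    Finset.sum_nonpos fun i _ => coord_term_add_le_zero (hc i) (hc' i).1 (hc' i).2
      (mulVec_apply_mem_Icc hA hbox i).1 (mulVec_apply_mem_Icc hA hbox i).2 hl0 hl1 hσ (hd i) hε
  simp only [Finset.sum_add_distrib, Pi.sub_apply] at hlin hexp hquad
  linarith

theorem sum_mul_w_ge_of_discrete (hA : ∀ i j, 0 ≤ A i j) {ε : ℝ} {c c' : Fin n → ℝ}
    (hc : ∀ i, c i = 0 ∨ c i = 1) (hc' : ∀ i, 0 ≤ c' i) (hd : ∀ i, |c' i - c i| ≤ ε) :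
    (1 - ε) * ∑ i, c i * w A i ≤ ∑ i, c' i * w A i := by
  rw [Finset.mul_sum]
  refine Finset.sum_le_sum fun i _ => ?_
  rw [← mul_assoc]
  refine mul_le_mul_of_nonneg_right ?_ (w_nonneg hA i)
  have hdi := hd i
  rcases hc i with h | h <;> rw [h] at hdi ⊢
  · simpa using hc' i
  · linarith [neg_abs_le (c' i - 1)]

end

theorem stmt_5_general {n : ℕ} (A : Matrix (Fin n) (Fin n) ℝ)
    (hsym : ∀ i j, A i j = A j i) (hnonneg : ∀ i j, 0 ≤ A i j)
    (σ : ℝ) (hσ : 2 < σ) (c : Fin n → ℝ) (hdisc : ∀ i, c i = 0 ∨ c i = 1)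
    (hvol : 0 < ∑ i, c i * w A i) :
    ∃ ε > 0, ∀ c' : Fin n → ℝ, (∀ i, 0 ≤ c' i ∧ c' i ≤ 1) → ‖c' - c‖ < ε →
      phiSigma A σ c ≤ phiSigma A σ c' := by
  have hbox : ∀ i, 0 ≤ c i ∧ c i ≤ 1 := fun i => by rcases hdisc i with h | h <;> simp [h]
  obtain ⟨hQ0, hQV⟩ := dotProduct_mulVec_self_mem_Icc hnonneg hbox
  set l := (c ⬝ᵥ A *ᵥ c) / ∑ i, c i * w A i
  have hl0 : 0 ≤ l := div_nonneg hQ0 hvol.le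
  have hl1 : l ≤ 1 := (div_le_one hvol).2 hQV
  have hσ1 : 0 < σ + 1 := by linarith
  refine ⟨(σ - 2) / (σ + 1), div_pos (by linarith) hσ1, fun c' hc' hdist => ?_⟩
  have hd : ∀ i, |c' i - c i| ≤ (σ - 2) / (σ + 1) :=
    fun i => (norm_le_pi_norm (c' - c) i).trans hdist.le
  have hV' : 0 < ∑ i, c' i * w A i :=
    (mul_pos (sub_pos.2 ((div_lt_one hσ1).2 (by linarith))) hvol).trans_le
      (sum_mul_w_ge_of_discrete hnonneg hdisc (fun i => (hc' i).1) hd)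
  have hgap := conductanceGap_le_of_discrete (IsSymm.ext fun i j => hsym j i) hnonneg
    (by linarith) hl0 hl1 (mul_div_cancel₀ _ hσ1.ne').le hdisc hc' hd
  rw [conductanceGap_eq_zero_of_discrete σ hdisc hvol.ne'] at hgap
  rw [phiSigma_eq_sub_conductanceGap σ (l + σ) hvol.ne',
    phiSigma_eq_sub_conductanceGap σ (l + σ) hV'.ne',
    conductanceGap_eq_zero_of_discrete σ hdisc hvol.ne', zero_div, sub_zero, le_sub_self_iff]
  exact div_nonpos_of_nonpos_of_nonneg hgap hV'.le

/-- for σ > 2, every discrete community (with positive volume and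
positive complement volume) is a local minimum of σ-conductance on the box [0,1]ⁿ. -/
theorem stmt_5 {n : ℕ} (A : Matrix (Fin n) (Fin n) ℝ)
    (hsym : ∀ i j, A i j = A j i) (hnonneg : ∀ i j, 0 ≤ A i j)
    (hw : ∀ i, 0 < w A i)
    (σ : ℝ) (hσ : 2 < σ) (c : Fin n → ℝ) (hdisc : ∀ i, c i = 0 ∨ c i = 1)
    (hvol : 0 < ∑ i, c i * w A i) (hcovol : 0 < ∑ i, (1 - c i) * w A i) :
    ∃ ε > 0, ∀ c' : Fin n → ℝ, (∀ i, 0 ≤ c' i ∧ c' i ≤ 1) → ‖c' - c‖ < ε →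
      phiSigma A σ c ≤ phiSigma A σ c' :=
  stmt_5_general A hsym hnonneg σ hσ c hdisc hvol
end

section
/- If σ > 0, then every local minimum of φ_σ on the box [0,1]ⁿ is a discrete vector (each coordinate is 0 or 1). More precisely, if c ∈ [0,1]ⁿ has some coordinate c_i with 0 < c_i < 1, then c is not a local minimum of φ_σ restricted to [0,1]ⁿ, because φ_σ restricted to varying the single coordinate c_i is a quadratic-over-linear function with strictly negative leading numerator coefficient (coming from −σ c_i² w_i), hence strictly concave wherever stationary. -/
open Finset

/-! Moving only the fractional coordinate `c i` by `s`, `φ_σ` becomes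
`1 - (q + b s + a s²) / (d + wᵢ s)` with `a = A i i + σ wᵢ > 0` and `d > 0`. With `r = q / d`,
the numerator minus `r` times the denominator is `s (b - r wᵢ) + a s²`, which is positive for
`s = δ` or for `s = -δ`, whichever makes the linear term nonnegative. So for every small `δ` one of
the two moves stays in the box and strictly lowers `φ_σ`. -/

open Matrix

theorem add_single_dotProduct_mulVec_add_single {ι R : Type*} [Fintype ι] [DecidableEq ι]
    [CommRing R] (M : Matrix ι ι R) (x : ι → R) (i : ι) (s : R) :
    (x + Pi.single i s) ⬝ᵥ M *ᵥ (x + Pi.single i s)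
      = x ⬝ᵥ M *ᵥ x + s * ((M *ᵥ x) i + (x ᵥ* M) i) + s ^ 2 * M i i := by
  rw [mulVec_add, dotProduct_add, add_dotProduct, add_dotProduct, single_dotProduct,
    single_dotProduct, dotProduct_mulVec x M (Pi.single i s), dotProduct_single]
  simp only [mulVec_single, Pi.smul_apply, col_apply, op_smul_eq_mul]
  ring

theorem exists_div_lt_quadratic_div_affine {K : Type*} [Field K] [LinearOrder K]
    [IsStrictOrderedRing K] {a b q p d δ : K} (ha : 0 < a) (hδ : δ ≠ 0)
    (hd : 0 < d) (hdδ : ∀ s, (s = δ ∨ s = -δ) → 0 < d + s * p) :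
    ∃ s, (s = δ ∨ s = -δ) ∧ q / d < (q + s * b + s ^ 2 * a) / (d + s * p) := by
  set r := q / d
  have hq : q = r * d := (div_mul_cancel₀ q hd.ne').symm
  have key : ∀ s, (s = δ ∨ s = -δ) → 0 ≤ s * (b - r * p) →
      r < (q + s * b + s ^ 2 * a) / (d + s * p) := by
    intro s hs hslope
    have hs0 : s ≠ 0 := by rcases hs with rfl | rfl <;> simpa
    have hsq : 0 < s ^ 2 * a := by positivity
    rw [lt_div_iff₀ (hdδ s hs), hq]
    linarith
  rcases le_total 0 (δ * (b - r * p)) with h | h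
  · exact ⟨δ, Or.inl rfl, key δ (Or.inl rfl) h⟩
  · exact ⟨-δ, Or.inr rfl, key (-δ) (Or.inr rfl) (by linarith)⟩

theorem mul_le_dotProduct_of_nonneg {ι R : Type*} [Fintype ι] [Semiring R] [PartialOrder R]
    [IsOrderedRing R] {x y : ι → R} (hx : 0 ≤ x)
    (hy : 0 ≤ y) (i : ι) : x i * y i ≤ x ⬝ᵥ y :=
  Finset.single_le_sum (fun j _ => mul_nonneg (hx j) (hy j)) (Finset.mem_univ i)

theorem add_single_mem_box {ι : Type*} [DecidableEq ι] {c : ι → ℝ}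
    (hbox : ∀ j, 0 ≤ c j ∧ c j ≤ 1) {i : ι} {s : ℝ} (h0 : 0 ≤ c i + s) (h1 : c i + s ≤ 1) :
    ∀ j, 0 ≤ (c + Pi.single i s : ι → ℝ) j ∧ (c + Pi.single i s : ι → ℝ) j ≤ 1 := by
  intro j
  rcases eq_or_ne j i with rfl | hj
  · simpa using ⟨h0, h1⟩
  · simpa [hj] using hbox j

theorem phiSigma_eq_one_sub_div {n : ℕ} (A : Matrix (Fin n) (Fin n) ℝ) (σ : ℝ) (c : Fin n → ℝ) :
    phiSigma A σ c = 1 - c ⬝ᵥ (A + σ • diagonal (w A)) *ᵥ c / (c ⬝ᵥ w A) := by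
  have hA : ∑ i, ∑ j, c i * A i j * c j = c ⬝ᵥ A *ᵥ c := by
    simp only [dotProduct, mulVec, Finset.mul_sum, mul_assoc]
  have hD : σ * ∑ i, c i ^ 2 * w A i = c ⬝ᵥ (σ • diagonal (w A)) *ᵥ c := by
    simp only [smul_mulVec, dotProduct, Pi.smul_apply, mulVec_diagonal, smul_eq_mul, Finset.mul_sum]
    exact Finset.sum_congr rfl fun i _ => by ring
  rw [phiSigma, add_mulVec, dotProduct_add, add_div, hA, ← hD, sub_sub]
  rfl

theorem exists_phiSigma_add_single_eq {n : ℕ} (A : Matrix (Fin n) (Fin n) ℝ) (σ : ℝ)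
    (c : Fin n → ℝ) (i : Fin n) :
    ∃ q b : ℝ, phiSigma A σ c = 1 - q / (c ⬝ᵥ w A) ∧ ∀ s : ℝ,
      phiSigma A σ (c + Pi.single i s)
        = 1 - (q + s * b + s ^ 2 * (A i i + σ * w A i)) / (c ⬝ᵥ w A + s * w A i) := by
  set M := A + σ • diagonal (w A)
  refine ⟨c ⬝ᵥ M *ᵥ c, (M *ᵥ c) i + (c ᵥ* M) i, phiSigma_eq_one_sub_div A σ c, fun s => ?_⟩
  rw [phiSigma_eq_one_sub_div, add_single_dotProduct_mulVec_add_single, add_dotProduct,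
    single_dotProduct]
  simp [M]

theorem stmt_6_general {n : ℕ} (A : Matrix (Fin n) (Fin n) ℝ)
    (hnonneg : ∀ i j, 0 ≤ A i j)
    (hw : ∀ i, 0 < w A i)
    (σ : ℝ) (hσ : 0 < σ) (c : Fin n → ℝ) (hbox : ∀ i, 0 ≤ c i ∧ c i ≤ 1)
    (hvol : 0 < ∑ i, c i * w A i)
    (i : Fin n) (hfrac : 0 < c i ∧ c i < 1) :
    ¬ ∃ ε > 0, ∀ c' : Fin n → ℝ, (∀ j, 0 ≤ c' j ∧ c' j ≤ 1) → ‖c' - c‖ < ε →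
        phiSigma A σ c ≤ phiSigma A σ c' := by
  rintro ⟨ε, hε, hmin⟩
  obtain ⟨δ, hδ, hδmin⟩ := exists_between (lt_min hε (lt_min hfrac.1 (sub_pos.2 hfrac.2)))
  simp only [lt_min_iff] at hδmin
  obtain ⟨hδε, hδ0, hδ1⟩ := hδmin
  have hcand : ∀ s, (s = δ ∨ s = -δ) → |s| < ε ∧ 0 < c i + s ∧ c i + s ≤ 1 := by
    rintro s (rfl | rfl) <;> simp only [abs_neg, abs_of_pos hδ] <;> refine ⟨?_, ?_, ?_⟩ <;> linarith
  have hbox' s (hs : s = δ ∨ s = -δ) := add_single_mem_box hbox (hcand s hs).2.1.le (hcand s hs).2.2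
  have hdenom s (hs : s = δ ∨ s = -δ) : 0 < c ⬝ᵥ w A + s * w A i := by
    have := mul_le_dotProduct_of_nonneg (R := ℝ) (fun j => (hbox' s hs j).1) (fun j => (hw j).le) i
    simpa [add_dotProduct, single_dotProduct] using
      (mul_pos (by simpa using (hcand s hs).2.1) (hw i)).trans_le this
  obtain ⟨q, b, hphi, hphi_add⟩ := exists_phiSigma_add_single_eq A σ c i
  obtain ⟨s, hs, hlt⟩ := exists_div_lt_quadratic_div_affine (q := q) (b := b) (d := c ⬝ᵥ w A)
    (add_pos_of_nonneg_of_pos (hnonneg i i) (mul_pos hσ (hw i))) hδ.ne' hvol hdenom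
  have := hmin (c + Pi.single i s) (hbox' s hs)
    (by simpa [Pi.norm_single] using (hcand s hs).1)
  rw [hphi, hphi_add] at this
  linarith

/-- for σ > 0, a point of the box [0,1]ⁿ having some strictly
fractional coordinate is not a local minimum of σ-conductance on the box. -/
theorem stmt_6 {n : ℕ} (A : Matrix (Fin n) (Fin n) ℝ)
    (hsym : ∀ i j, A i j = A j i) (hnonneg : ∀ i j, 0 ≤ A i j)
    (hw : ∀ i, 0 < w A i)
    (σ : ℝ) (hσ : 0 < σ) (c : Fin n → ℝ) (hbox : ∀ i, 0 ≤ c i ∧ c i ≤ 1)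
    (hvol : 0 < ∑ i, c i * w A i)
    (i : Fin n) (hfrac : 0 < c i ∧ c i < 1) :
    ¬ ∃ ε > 0, ∀ c' : Fin n → ℝ, (∀ j, 0 ≤ c' j ∧ c' j ≤ 1) → ‖c' - c‖ < ε →
        phiSigma A σ c ≤ phiSigma A σ c' :=
  stmt_6_general A hnonneg hw σ hσ c hbox hvol i hfrac
end

section
/- Let f(t) = (α₁ + α₂t + α₃t²)/(α₄ + α₅t) be a one-variable function with α₃ < 0 and α₄ + α₅t > 0 on [a,b]. Then f attains its minimum over [a,b] only at t = a or t = b; that is, min(f(a), f(b)) < f(t) for all t ∈ (a,b). -/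
/-- a quadratic-over-linear function with strictly negative quadratic
coefficient and positive denominator on [a,b] attains its minimum over [a,b] only
at the endpoints: every interior value strictly exceeds min(f a, f b). -/
theorem stmt_7 (α₁ α₂ α₃ α₄ α₅ : ℝ) (a b : ℝ) (hab : a < b)
    (hα₃ : α₃ < 0)
    (hden : ∀ t ∈ Set.Icc a b, 0 < α₄ + α₅ * t)
    (f : ℝ → ℝ)
    (hf : ∀ t ∈ Set.Icc a b, f t = (α₁ + α₂ * t + α₃ * t ^ 2) / (α₄ + α₅ * t)) :
    ∀ t ∈ Set.Ioo a b, min (f a) (f b) < f t := by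
  intro t ht
  obtain ⟨ht1, ht2⟩ := ht
  have hda := hden a ⟨le_refl a, hab.le⟩
  have hdb := hden b ⟨hab.le, le_refl b⟩
  have hdt := hden t ⟨ht1.le, ht2.le⟩
  have hfa := hf a ⟨le_refl a, hab.le⟩
  have hfb := hf b ⟨hab.le, le_refl b⟩
  have hft := hf t ⟨ht1.le, ht2.le⟩
  set c := min (f a) (f b) with hc
  have hca : c * (α₄ + α₅ * a) ≤ α₁ + α₂ * a + α₃ * a ^ 2 := by
    have : c ≤ f a := min_le_left _ _
    rw [hfa, le_div_iff₀ hda] at this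
    linarith
  have hcb : c * (α₄ + α₅ * b) ≤ α₁ + α₂ * b + α₃ * b ^ 2 := by
    have : c ≤ f b := min_le_right _ _
    rw [hfb, le_div_iff₀ hdb] at this
    linarith
  rw [hft, lt_div_iff₀ hdt]
  nlinarith [mul_nonneg (sub_nonneg.2 hca) (sub_nonneg.2 ht2.le),
    mul_nonneg (sub_nonneg.2 hcb) (sub_nonneg.2 ht1.le),
    mul_pos (mul_pos (sub_pos.2 ht1) (sub_pos.2 ht2)) (sub_pos.2 hab)]
end

section
/- For a discrete community C with positive volume in a finite graph, a node i satisfies ∇φ₀(𝟙_C)_i < 0 if and only if 2a_{iC}/w_i > a_{CC}/a_{CV}, i.e., if and only if 2a_{iC}/w_i > 1 − φ(C). Thus in the EM algorithm with σ = 0, a node joins the community exactly when twice its fraction of edges into the community exceeds one minus the community's conductance. -/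
open Finset

/-- edge weight from a node to a set. -/
noncomputable def aN {n : ℕ} (A : Matrix (Fin n) (Fin n) ℝ) (i : Fin n) (C : Finset (Fin n)) : ℝ :=
  ∑ j ∈ C, A i j

/-- total edge weight inside a set. -/
noncomputable def aCC {n : ℕ} (A : Matrix (Fin n) (Fin n) ℝ) (C : Finset (Fin n)) : ℝ :=
  ∑ i ∈ C, ∑ j ∈ C, A i j

/-- volume of a set of nodes. -/
noncomputable def vol {n : ℕ} (A : Matrix (Fin n) (Fin n) ℝ) (C : Finset (Fin n)) : ℝ :=
  ∑ j ∈ C, w A j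

/-- conductance of a set. -/
noncomputable def phi {n : ℕ} (A : Matrix (Fin n) (Fin n) ℝ) (C : Finset (Fin n)) : ℝ :=
  1 - aCC A C / vol A C

theorem mul_div_sq_sub_div_neg_iff {K : Type*} [Field K] [LinearOrder K] [IsStrictOrderedRing K]
    {w v b c : K} (hw : 0 < w) (hv : 0 < v) :
    w * c / v ^ 2 - b / v < 0 ↔ c / v < b / w := by
  have factor : w * c / v ^ 2 - b / v = w / v * (c / v - b / w) := by
    field_simp
  rw [factor, ← mul_zero (w / v), mul_lt_mul_iff_right₀ (div_pos hw hv), sub_neg]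

theorem one_sub_phi {n : ℕ} (A : Matrix (Fin n) (Fin n) ℝ) (C : Finset (Fin n)) :
    1 - phi A C = aCC A C / vol A C :=
  sub_sub_cancel 1 _

theorem stmt_15_general {n : ℕ} (A : Matrix (Fin n) (Fin n) ℝ)
    (hw : ∀ i, 0 < w A i)
    (C : Finset (Fin n)) (hvol : 0 < vol A C) (i : Fin n) :
    ((w A i * aCC A C / (vol A C) ^ 2 - 2 * aN A i C / vol A C < 0) ↔
      2 * aN A i C / w A i > aCC A C / vol A C) ∧
    ((w A i * aCC A C / (vol A C) ^ 2 - 2 * aN A i C / vol A C < 0) ↔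
      2 * aN A i C / w A i > 1 - phi A C) := by
  have gradient_neg_iff := mul_div_sq_sub_div_neg_iff (b := 2 * aN A i C) (c := aCC A C) (hw i) hvol
  exact ⟨gradient_neg_iff, one_sub_phi A C ▸ gradient_neg_iff⟩

/-- the gradient of (0-)conductance at the indicator of C is negative
at node i iff 2a_{iC}/w_i > a_{CC}/a_{CV}, equivalently iff 2a_{iC}/w_i > 1 − φ(C). -/
theorem stmt_15 {n : ℕ} (A : Matrix (Fin n) (Fin n) ℝ)
    (hsym : ∀ i j, A i j = A j i) (hnonneg : ∀ i j, 0 ≤ A i j)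
    (hw : ∀ i, 0 < w A i)
    (C : Finset (Fin n)) (hvol : 0 < vol A C) (i : Fin n) :
    ((w A i * aCC A C / (vol A C) ^ 2 - 2 * aN A i C / vol A C < 0) ↔
      2 * aN A i C / w A i > aCC A C / vol A C) ∧
    ((w A i * aCC A C / (vol A C) ^ 2 - 2 * aN A i C / vol A C < 0) ↔
      2 * aN A i C / w A i > 1 - phi A C) :=
  stmt_15_general A hw C hvol i
end
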